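/- arXiv:2410.06764 — 2 statements merged into one kernel-verified Lean document; each statement's English description precedes it below -/
import Mathlib

section
/- If f is an elementary integral circulation on a finite connected undirected graph with cycle rank r, then the L-infinity norm of f is at most r, i.e., |f(e)| <= r for every edge e. -/
open Finset

/-- Flow conservation at every vertex: an integral circulation on a graph whose
edges are given a reference orientation by `src` and `tgt`. -/
def IsCirculation {V E : Type} [Fintype E] [DecidableEq V] (src tgt : E → V) (f : E → ℤ) : Prop :=
  ∀ v : V, ∑ e : E, (if tgt e = v then f e else 0) = ∑ e : E, (if src e = v then f e else 0)

/-- Two vertices are adjacent via an edge in `S` (edges viewed as undirected). -/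
def EdgeAdj {V E : Type} (src tgt : E → V) (S : Set E) (a b : V) : Prop :=
  ∃ e ∈ S, (src e = a ∧ tgt e = b) ∨ (src e = b ∧ tgt e = a)

/-- Reachability using only edges in `S`. -/
def Reach {V E : Type} (src tgt : E → V) (S : Set E) : V → V → Prop :=
  Relation.ReflTransGen (EdgeAdj src tgt S)

/-- The (multi)graph is connected. -/
def GraphConnected {V E : Type} (src tgt : E → V) : Prop :=
  ∀ a b : V, Reach src tgt Set.univ a b

/-- `v` is an endpoint of some edge in `S`. -/
def Touches {V E : Type} (src tgt : E → V) (S : Set E) (v : V) : Prop :=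
  ∃ e ∈ S, src e = v ∨ tgt e = v

/-- The edge set `S` induces a connected subgraph (on the vertices it touches). -/
def ConnectedOn {V E : Type} (src tgt : E → V) (S : Set E) : Prop :=
  ∀ a b : V, Touches src tgt S a → Touches src tgt S b → Reach src tgt S a b

/-- Degree of `v` in the support of `f` (loops counted twice). -/
def suppDegree {V E : Type} [Fintype E] [DecidableEq V] (src tgt : E → V) (f : E → ℤ) (v : V) : ℕ :=
  (univ.filter fun e => f e ≠ 0 ∧ src e = v).card +
  (univ.filter fun e => f e ≠ 0 ∧ tgt e = v).card

/-- A cycle flow: a circulation whose support forms a single (undirected) cycle.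
The support is nonempty, connected, and every vertex it touches has degree 2 in it. -/
def IsCycleFlow {V E : Type} [Fintype E] [DecidableEq V] (src tgt : E → V) (f : E → ℤ) : Prop :=
  IsCirculation src tgt f ∧ (∃ e, f e ≠ 0) ∧
    ConnectedOn src tgt {e | f e ≠ 0} ∧
    ∀ v : V, Touches src tgt {e | f e ≠ 0} v → suppDegree src tgt f v = 2

/-- A unit cycle flow: a cycle flow with values in `{-1, 0, 1}`. -/
def IsUnitCycleFlow {V E : Type} [Fintype E] [DecidableEq V] (src tgt : E → V) (f : E → ℤ) : Prop :=
  IsCycleFlow src tgt f ∧ ∀ e, f e = 0 ∨ f e = 1 ∨ f e = -1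

/-- `f` contains `g`: on every edge, `|g e| ≤ |f e|` and they have the same sign
whenever `g e ≠ 0`. -/
def FlowContains {E : Type} (f g : E → ℤ) : Prop :=
  ∀ e, |g e| ≤ |f e| ∧ (g e ≠ 0 → 0 < g e * f e)

/-- A circulation is elementary if it does not contain twice a unit cycle flow. -/
def IsElementary {V E : Type} [Fintype E] [DecidableEq V] (src tgt : E → V) (f : E → ℤ) : Prop :=
  ¬ ∃ C : E → ℤ, IsUnitCycleFlow src tgt C ∧ FlowContains f (fun e => 2 * C e)

/-- `T` is a spanning tree: its edges connect all vertices and `|T| = |V| - 1`. -/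
def IsSpanningTree {V E : Type} [Fintype V] [Fintype E] [DecidableEq V] [DecidableEq E]
    (src tgt : E → V) (T : Finset E) : Prop :=
  (∀ a b : V, Reach src tgt ↑T a b) ∧ T.card + 1 = Fintype.card V

/-- Number of connected components of the subgraph on all of `V` using edges of `S`. -/
noncomputable def numComponents {V E : Type} (src tgt : E → V) (S : Set E) : ℕ :=
  Nat.card (Quot (Reach src tgt S))

/-!
Following a circulation along its direction inside its support must close up into a simple
cycle, and the corresponding unit cycle flow is contained in the circulation. Subtracting
cycles that avoid `e₀` yields one through `e₀`; repeating, `f` contains conformally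
`|f e₀|` unit cycle flows through `e₀`. If `|f e₀| > r`, then `r + 1` of them are linearly
dependent modulo 2, because the mod-2 cycle space of a connected graph has dimension
`|E| - |V| + 1 = r`. The sum `D` over a dependent subfamily is an even circulation contained in
`f` with `D e₀ ≠ 0`, and a unit cycle flow `C` inside `D / 2` gives `2 C ⊆ f`, contradicting
elementarity.
-/

theorem EdgeAdj.symm {V E : Type} {src tgt : E → V} {S : Set E} {a b : V}
    (h : EdgeAdj src tgt S a b) : EdgeAdj src tgt S b a := by
  obtain ⟨e, he, h | h⟩ := h
  · exact ⟨e, he, Or.inr h⟩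
  · exact ⟨e, he, Or.inl h⟩

theorem Reach.symm {V E : Type} {src tgt : E → V} {S : Set E} {a b : V}
    (h : Reach src tgt S a b) : Reach src tgt S b a := by
  induction h with
  | refl => exact .refl
  | tail _ hbc ih => exact .head hbc.symm ih

theorem exists_lt_map_eq_injOn_Iio {α : Type*} [Finite α] (v : ℕ → α) :
    ∃ i j, i < j ∧ v i = v j ∧ Set.InjOn v (Set.Iio j) := by
  classical
  have hex : ∃ j, ∃ i < j, v i = v j := by
    obtain ⟨a, b, hab, h⟩ := Finite.exists_ne_map_eq_of_infinite v
    rcases hab.lt_or_gt with hlt | hlt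
    · exact ⟨b, a, hlt, h⟩
    · exact ⟨a, b, hlt, h.symm⟩
  obtain ⟨i, hij, hv⟩ := Nat.find_spec hex
  refine ⟨i, Nat.find hex, hij, hv, fun k hk l hl hkl => ?_⟩
  by_contra hne
  rcases lt_or_gt_of_ne hne with h | h
  · exact Nat.find_min hex hl ⟨k, h, hkl⟩
  · exact Nat.find_min hex hk ⟨l, h, hkl.symm⟩

theorem Int.abs_add_abs_sub_eq_abs_iff {a c : ℤ} :
    |c| + |a - c| = |a| ↔ |c| ≤ |a| ∧ (c ≠ 0 → 0 < c * a) := by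
  rw [mul_pos_iff]
  rcases le_total 0 c with hc | hc <;> rcases le_total 0 a with ha | ha <;>
    rcases le_total 0 (a - c) with hac | hac <;>
    simp only [abs_of_nonneg, abs_of_nonpos, hc, ha, hac] <;> omega

theorem sum_abs_add_abs_sub_sum_of_univ {ι α : Type*} [Fintype ι] [DecidableEq ι]
    [AddCommGroup α] [LinearOrder α] [IsOrderedAddMonoid α] {x : ι → α} {a : α}
    (h : ∑ i, |x i| + |a - ∑ i, x i| = |a|) (s : Finset ι) :
    ∑ i ∈ s, |x i| + |a - ∑ i ∈ s, x i| = |a| := by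
  refine le_antisymm ?_ ?_
  · have hrest : |a - ∑ i ∈ s, x i| ≤ |a - ∑ i, x i| + ∑ i ∈ sᶜ, |x i| := by
      rw [← Finset.sum_add_sum_compl s x, ← sub_sub]
      calc |a - ∑ i ∈ s, x i| = |(a - ∑ i ∈ s, x i - ∑ i ∈ sᶜ, x i) + ∑ i ∈ sᶜ, x i| := by
            rw [sub_add_cancel]
        _ ≤ _ := (abs_add_le _ _).trans (by gcongr; exact Finset.abs_sum_le_sum_abs x sᶜ)
    calc ∑ i ∈ s, |x i| + |a - ∑ i ∈ s, x i|
        ≤ ∑ i ∈ s, |x i| + (|a - ∑ i, x i| + ∑ i ∈ sᶜ, |x i|) := by gcongr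
      _ = |a| := by rw [← h, ← Finset.sum_add_sum_compl s fun i => |x i|]; abel
  · calc |a| ≤ |∑ i ∈ s, x i| + |a - ∑ i ∈ s, x i| :=
          sub_le_iff_le_add'.1 (abs_sub_abs_le_abs_sub _ _)
      _ ≤ _ := by gcongr; exact Finset.abs_sum_le_sum_abs x s

section Containment

variable {E : Type}

theorem flowContains_iff {f g : E → ℤ} : FlowContains f g ↔ ∀ e, |g e| + |f e - g e| = |f e| :=
  forall_congr' fun _ => Int.abs_add_abs_sub_eq_abs_iff.symm

theorem FlowContains.trans {f g h : E → ℤ} (hfg : FlowContains f g) (hgh : FlowContains g h) :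
    FlowContains f h := by
  rw [flowContains_iff] at *
  intro e
  have := hfg e
  have := hgh e
  have := abs_sub_le (f e) (g e) (h e)
  have := abs_sub_abs_le_abs_sub (f e) (h e)
  linarith

theorem FlowContains.sub {f g : E → ℤ} (h : FlowContains f g) : FlowContains f (f - g) := by
  rw [flowContains_iff] at *
  intro e
  rw [Pi.sub_apply, sub_sub_cancel, add_comm]
  exact h e

theorem FlowContains.mul_left {f g : E → ℤ} (h : FlowContains f g) (k : ℤ) :
    FlowContains (fun e => k * f e) (fun e => k * g e) := by
  rw [flowContains_iff] at *
  intro e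
  rw [← mul_sub, abs_mul, abs_mul, abs_mul, ← mul_add, h e]

theorem flowContains_ite_sign (p : E → Prop) [DecidablePred p] (f : E → ℤ) :
    FlowContains f (fun e => if p e then Int.sign (f e) else 0) := by
  rw [flowContains_iff]
  intro e
  split_ifs
  · rcases lt_trichotomy (f e) 0 with h | h | h
    · rw [Int.sign_eq_neg_one_of_neg h, abs_of_neg h, abs_of_nonpos (a := f e - -1) (by omega),
        abs_neg, abs_one]
      omega
    · simp [h]
    · rw [Int.sign_eq_one_of_pos h, abs_of_pos h, abs_of_nonneg (a := f e - 1) (by omega),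
        abs_one]
      omega
  · simp

theorem FlowContains.sum_natAbs_sub_lt [Fintype E] {f g : E → ℤ} (h : FlowContains f g) {e₀ : E}
    (he₀ : g e₀ ≠ 0) : ∑ e, (f e - g e).natAbs < ∑ e, (f e).natAbs := by
  have hpt : ∀ e, (g e).natAbs + (f e - g e).natAbs = (f e).natAbs := fun e => by
    have := flowContains_iff.1 h e
    simp only [Int.abs_eq_natAbs] at this
    omega
  refine Finset.sum_lt_sum (fun e _ => by have := hpt e; omega) ⟨e₀, Finset.mem_univ _, ?_⟩
  have := hpt e₀
  have : (g e₀).natAbs ≠ 0 := by simpa using he₀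
  omega

-- `f` is the sum of the `Cs i` and a remainder, with no cancellation among them on any edge.
def ConformalFamily {ι : Type*} [Fintype ι] (f : E → ℤ) (Cs : ι → E → ℤ) : Prop :=
  ∀ e, ∑ i, |Cs i e| + |f e - ∑ i, Cs i e| = |f e|

theorem conformalFamily_of_isEmpty {ι : Type*} [Fintype ι] [IsEmpty ι] (f : E → ℤ)
    (Cs : ι → E → ℤ) : ConformalFamily f Cs := by
  intro e
  simp

theorem ConformalFamily.cons {m : ℕ} {f C : E → ℤ} {Cs : Fin m → E → ℤ} (hC : FlowContains f C)
    (hCs : ConformalFamily (f - C) Cs) : ConformalFamily f (Fin.cons C Cs) := by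
  intro e
  have h₁ := flowContains_iff.1 hC e
  have h₂ := hCs e
  simp only [Fin.sum_univ_succ, Fin.cons_zero, Fin.cons_succ, Pi.sub_apply] at h₂ ⊢
  rw [← sub_sub, add_assoc, h₂, h₁]

theorem ConformalFamily.flowContains_sum {ι : Type*} [Fintype ι] [DecidableEq ι] {f : E → ℤ}
    {Cs : ι → E → ℤ} (h : ConformalFamily f Cs) (s : Finset ι) :
    FlowContains f (fun e => ∑ i ∈ s, Cs i e) := by
  rw [flowContains_iff]
  intro e
  have := sum_abs_add_abs_sub_sum_of_univ (h e) s
  have := Finset.abs_sum_le_sum_abs (fun i => Cs i e) s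
  have := abs_sub_abs_le_abs_sub (f e) (∑ i ∈ s, Cs i e)
  linarith

theorem ConformalFamily.abs_sum {ι : Type*} [Fintype ι] [DecidableEq ι] {f : E → ℤ}
    {Cs : ι → E → ℤ} (h : ConformalFamily f Cs) (s : Finset ι) (e : E) :
    |∑ i ∈ s, Cs i e| = ∑ i ∈ s, |Cs i e| := by
  have := sum_abs_add_abs_sub_sum_of_univ (h e) s
  have := Finset.abs_sum_le_sum_abs (fun i => Cs i e) s
  have := abs_sub_abs_le_abs_sub (f e) (∑ i ∈ s, Cs i e)
  linarith

end Containment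

section Divergence

variable {V E : Type} [Fintype E] [DecidableEq V] {src tgt : E → V}

variable (src tgt) in
def divergence (R : Type*) [CommRing R] : (E → R) →ₗ[R] (V → R) where
  toFun f v := ∑ e, (if tgt e = v then f e else 0) - ∑ e, (if src e = v then f e else 0)
  map_add' f g := by
    ext v
    simp only [Pi.add_apply, ite_add_zero, Finset.sum_add_distrib]
    abel
  map_smul' k f := by
    ext v
    simp [Finset.mul_sum, mul_sub]

theorem isCirculation_iff_mem_ker {f : E → ℤ} :
    IsCirculation src tgt f ↔ f ∈ LinearMap.ker (divergence src tgt ℤ) := by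
  simp only [LinearMap.mem_ker, funext_iff]
  exact forall_congr' fun v => sub_eq_zero.symm

theorem IsCirculation.sub {f g : E → ℤ} (hf : IsCirculation src tgt f)
    (hg : IsCirculation src tgt g) : IsCirculation src tgt (f - g) := by
  rw [isCirculation_iff_mem_ker] at *
  exact sub_mem hf hg

theorem IsCirculation.sum {ι : Type*} {Cs : ι → E → ℤ} (hCs : ∀ i, IsCirculation src tgt (Cs i))
    (s : Finset ι) : IsCirculation src tgt (fun e => ∑ i ∈ s, Cs i e) := by
  simp only [isCirculation_iff_mem_ker, ← Finset.sum_apply] at *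
  exact sum_mem fun i _ => hCs i

theorem IsCirculation.of_mul {f : E → ℤ} {k : ℤ} (hk : k ≠ 0)
    (h : IsCirculation src tgt (fun e => k * f e)) : IsCirculation src tgt f := by
  rw [isCirculation_iff_mem_ker, LinearMap.mem_ker] at *
  exact (smul_eq_zero.1 ((map_smul _ k f).symm.trans h)).resolve_left hk

theorem IsCirculation.intCast_mem_ker {f : E → ℤ} (hf : IsCirculation src tgt f) (R : Type*)
    [CommRing R] : (fun e => (f e : R)) ∈ LinearMap.ker (divergence src tgt R) := by
  rw [LinearMap.mem_ker]
  ext v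
  have := congrArg (Int.cast : ℤ → R) (hf v)
  push_cast [apply_ite] at this
  simp [divergence, this]

section Rank

variable {K : Type*} [Field K]

theorem divergence_single [DecidableEq E] (e : E) :
    divergence src tgt K (Pi.single e 1) = Pi.single (tgt e) 1 - Pi.single (src e) 1 := by
  ext v
  have hsum (p : E → V) : (∑ x, if p x = v then (Pi.single e 1 : E → K) x else 0)
      = (Pi.single (p e) 1 : V → K) v := by
    rw [Finset.sum_eq_single e (fun x _ hx => by simp [hx]) (by simp)]
    simp [Pi.single_apply, eq_comm]
  simp only [divergence, LinearMap.coe_mk, AddHom.coe_mk, Pi.sub_apply, hsum]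

theorem single_sub_single_mem_range_divergence {S : Set E} {a b : V} (h : Reach src tgt S a b) :
    Pi.single b 1 - Pi.single a 1 ∈ LinearMap.range (divergence src tgt K) := by
  classical
  induction h with
  | refl => simp
  | @tail c d _ hcd ih =>
    obtain ⟨e, -, ⟨rfl, rfl⟩ | ⟨rfl, rfl⟩⟩ := hcd
    · have := add_mem ih (LinearMap.mem_range_self (divergence src tgt K) (Pi.single e 1))
      rwa [divergence_single, add_comm, sub_add_sub_cancel] at this
    · have := sub_mem ih (LinearMap.mem_range_self (divergence src tgt K) (Pi.single e 1))
      rwa [divergence_single, sub_sub_sub_cancel_left] at this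

theorem card_le_finrank_range_divergence_add_one [Fintype V] (hconn : GraphConnected src tgt) :
    Fintype.card V ≤ Module.finrank K (LinearMap.range (divergence src tgt K)) + 1 := by
  rcases isEmpty_or_nonempty V with hV | ⟨⟨v₀⟩⟩
  · simp
  -- by connectivity, the range contains the hyperplane of vectors with coordinate sum zero
  let total : (V → K) →ₗ[K] K := ∑ v, LinearMap.proj v
  have hker : LinearMap.ker total ≤ LinearMap.range (divergence src tgt K) := by
    intro y hy
    have hy : ∑ v, y v = 0 := by simpa [total] using hy
    have hdecomp : y = ∑ v, y v • (Pi.single v 1 - Pi.single v₀ 1) := by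
      simpa [smul_sub, Finset.sum_sub_distrib, ← Finset.sum_smul, hy] using pi_eq_sum_univ' y
    rw [hdecomp]
    exact sum_mem fun v _ => Submodule.smul_mem _ _
      (single_sub_single_mem_range_divergence (hconn v₀ v))
  have hrank := total.finrank_range_add_finrank_ker
  have hrange : Module.finrank K (LinearMap.range total) ≤ 1 :=
    (Submodule.finrank_le _).trans (by simp)
  have hmono := Submodule.finrank_mono hker
  simp only [Module.finrank_pi] at hrank
  omega

theorem finrank_ker_divergence_add_card_le [Fintype V] (hconn : GraphConnected src tgt) :
    Module.finrank K (LinearMap.ker (divergence src tgt K)) + Fintype.card V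
      ≤ Fintype.card E + 1 := by
  have hrank := (divergence src tgt K).finrank_range_add_finrank_ker
  have hrange := card_le_finrank_range_divergence_add_one (K := K) hconn
  simp only [Module.finrank_pi] at hrank
  omega

end Rank

end Divergence

theorem Submodule.exists_nonempty_sum_eq_zero_of_finrank_lt {ι M : Type*} [Fintype ι]
    [AddCommGroup M] [Module (ZMod 2) M] (p : Submodule (ZMod 2) M) [FiniteDimensional (ZMod 2) p]
    {v : ι → M} (hv : ∀ i, v i ∈ p) (h : Module.finrank (ZMod 2) p < Fintype.card ι) :
    ∃ s : Finset ι, s.Nonempty ∧ ∑ i ∈ s, v i = 0 := by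
  classical
  have hdep : ¬ LinearIndependent (ZMod 2) (fun i => (⟨v i, hv i⟩ : p)) := fun hli =>
    h.not_ge hli.fintype_card_le_finrank
  obtain ⟨c, hc, i, hi⟩ := Fintype.not_linearIndependent_iff.1 hdep
  have hc_one : ∀ j, c j ≠ 0 → c j = 1 := fun j => by generalize c j = a; revert a; decide
  refine ⟨Finset.univ.filter (c · ≠ 0), ⟨i, by simpa using hi⟩, ?_⟩
  have hsum := congrArg Subtype.val hc
  simp only [Submodule.coe_sum, Submodule.coe_smul, Submodule.coe_zero] at hsum
  rw [← hsum, Finset.sum_filter]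
  refine Finset.sum_congr rfl fun j _ => ?_
  split_ifs with hj
  · rw [hc_one j hj, one_smul]
  · rw [not_not.1 hj, zero_smul]

section EvenSubsum

variable {V E : Type} [Fintype V] [Fintype E] [DecidableEq V] {src tgt : E → V}

theorem exists_nonempty_even_sum_of_isCirculation (hconn : GraphConnected src tgt) {ι : Type*}
    [Fintype ι] {Cs : ι → E → ℤ} (hCs : ∀ i, IsCirculation src tgt (Cs i))
    (hcard : Fintype.card E + 1 < Fintype.card V + Fintype.card ι) :
    ∃ s : Finset ι, s.Nonempty ∧ ∀ e, 2 ∣ ∑ i ∈ s, Cs i e := by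
  have hdim := finrank_ker_divergence_add_card_le (K := ZMod 2) hconn
  obtain ⟨s, hs, hsum⟩ := Submodule.exists_nonempty_sum_eq_zero_of_finrank_lt _
    (fun i => (hCs i).intCast_mem_ker (ZMod 2)) (by omega)
  refine ⟨s, hs, fun e => ?_⟩
  exact_mod_cast (ZMod.intCast_zmod_eq_zero_iff_dvd _ 2).1 (by simpa using congrFun hsum e)

end EvenSubsum

section FlowCycle

variable {V E : Type} {src tgt : E → V} {g : E → ℤ}

variable (src tgt g) in
def flowTail (e : E) : V := if 0 < g e then src e else tgt e

variable (src tgt g) in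
def flowHead (e : E) : V := if 0 < g e then tgt e else src e

theorem edgeAdj_flowTail_flowHead {S : Set E} {e : E} (he : e ∈ S) :
    EdgeAdj src tgt S (flowTail src tgt g e) (flowHead src tgt g e) := by
  unfold flowTail flowHead
  split_ifs
  · exact ⟨e, he, Or.inl ⟨rfl, rfl⟩⟩
  · exact ⟨e, he, Or.inr ⟨rfl, rfl⟩⟩

theorem src_eq_or_tgt_eq_iff (e : E) (u : V) :
    src e = u ∨ tgt e = u ↔ flowTail src tgt g e = u ∨ flowHead src tgt g e = u := by
  unfold flowTail flowHead
  split_ifs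
  · rfl
  · exact or_comm

theorem ite_src_add_ite_tgt [DecidableEq V] {M : Type*} [AddCommMonoid M] (e : E) (u : V)
    (x : M) : (if src e = u then x else 0) + (if tgt e = u then x else 0) =
      (if flowTail src tgt g e = u then x else 0) +
        (if flowHead src tgt g e = u then x else 0) := by
  unfold flowTail flowHead
  split_ifs <;> simp only [add_comm]

theorem ite_tgt_sub_ite_src_sign_mul [DecidableEq V] {e : E} (he : g e ≠ 0) (u : V) (x : ℤ) :
    (if tgt e = u then (g e).sign * x else 0) - (if src e = u then (g e).sign * x else 0) =
      (if flowHead src tgt g e = u then x else 0) -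
        (if flowTail src tgt g e = u then x else 0) := by
  unfold flowTail flowHead
  rcases lt_or_gt_of_ne he with hneg | hpos
  · rw [Int.sign_eq_neg_one_of_neg hneg, if_neg hneg.not_gt, if_neg hneg.not_gt]
    split_ifs <;> ring
  · rw [Int.sign_eq_one_of_pos hpos, if_pos hpos, if_pos hpos]
    simp only [one_mul]

-- `w 0, …, w (n - 1)` is a closed walk in the support of `g` along the direction of `g`,
-- through pairwise distinct vertices.
variable (src tgt g) in
structure IsFlowCycle (w : ℕ → E) (n : ℕ) : Prop where
  pos : 0 < n
  ne_zero : ∀ k < n, g (w k) ≠ 0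
  head_eq : ∀ k < n, flowHead src tgt g (w k) = flowTail src tgt g (w (k + 1))
  closed : flowTail src tgt g (w n) = flowTail src tgt g (w 0)
  injOn : Set.InjOn (fun k => flowTail src tgt g (w k)) (Set.Iio n)

variable (g) in
def cycleFlow [DecidableEq E] (w : ℕ → E) (n : ℕ) : E → ℤ :=
  fun e => if e ∈ (Finset.range n).image w then Int.sign (g e) else 0

namespace IsFlowCycle

variable {w : ℕ → E} {n : ℕ}

theorem injOn_range (h : IsFlowCycle src tgt g w n) : Set.InjOn w ↑(Finset.range n) :=
  fun k hk l hl hkl => h.injOn (by simpa using hk) (by simpa using hl) (by simp only [hkl])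

theorem ne_zero_of_mem_image [DecidableEq E] (h : IsFlowCycle src tgt g w n) {e : E}
    (he : e ∈ (Finset.range n).image w) : g e ≠ 0 := by
  obtain ⟨k, hk, rfl⟩ := Finset.mem_image.1 he
  exact h.ne_zero k (Finset.mem_range.1 hk)

theorem cycleFlow_ne_zero_iff [DecidableEq E] (h : IsFlowCycle src tgt g w n) {e : E} :
    cycleFlow g w n e ≠ 0 ↔ e ∈ (Finset.range n).image w := by
  unfold cycleFlow
  split_ifs with he
  · simpa [he] using h.ne_zero_of_mem_image he
  · simp [he]

theorem sum_ite_mem_image [DecidableEq E] [Fintype E] (h : IsFlowCycle src tgt g w n)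
    {M : Type*} [AddCommMonoid M] (G : E → M) :
    ∑ e, (if e ∈ (Finset.range n).image w then G e else 0) =
      ∑ k ∈ Finset.range n, G (w k) := by
  rw [Finset.sum_ite_mem, Finset.univ_inter, Finset.sum_image h.injOn_range]

theorem sum_flowHead (h : IsFlowCycle src tgt g w n) {M : Type*} [AddCancelCommMonoid M]
    (F : V → M) : ∑ k ∈ Finset.range n, F (flowHead src tgt g (w k)) =
      ∑ k ∈ Finset.range n, F (flowTail src tgt g (w k)) := by
  have hfirst := Finset.sum_range_succ' (fun k => F (flowTail src tgt g (w k))) n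
  have hlast := Finset.sum_range_succ (fun k => F (flowTail src tgt g (w k))) n
  rw [h.closed] at hlast
  rw [← add_right_cancel (hfirst.symm.trans hlast)]
  exact Finset.sum_congr rfl fun k hk => by rw [h.head_eq k (Finset.mem_range.1 hk)]

theorem exists_flowTail_eq_of_touches [DecidableEq E] (h : IsFlowCycle src tgt g w n) {u : V}
    (hu : Touches src tgt {e | cycleFlow g w n e ≠ 0} u) :
    ∃ l < n, flowTail src tgt g (w l) = u := by
  obtain ⟨e, he, hu⟩ := hu
  obtain ⟨k, hk, rfl⟩ := Finset.mem_image.1 (h.cycleFlow_ne_zero_iff.1 he)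
  rw [Finset.mem_range] at hk
  rcases (src_eq_or_tgt_eq_iff (g := g) _ _).1 hu with hu | hu
  · exact ⟨k, hk, hu⟩
  · rw [h.head_eq k hk] at hu
    rcases (Nat.succ_le_of_lt hk).lt_or_eq with hlt | hend
    · exact ⟨k + 1, hlt, hu⟩
    · exact ⟨0, h.pos, by rwa [← h.closed, ← hend]⟩

theorem reach_flowTail [DecidableEq E] (h : IsFlowCycle src tgt g w n) {l : ℕ} (hl : l ≤ n) :
    Reach src tgt {e | cycleFlow g w n e ≠ 0} (flowTail src tgt g (w 0))
      (flowTail src tgt g (w l)) := by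
  induction l with
  | zero => exact .refl
  | succ l ih =>
    refine (ih (by omega)).tail ?_
    rw [← h.head_eq l (by omega)]
    exact edgeAdj_flowTail_flowHead
      (h.cycleFlow_ne_zero_iff.2 (Finset.mem_image_of_mem w (Finset.mem_range.2 (by omega))))

theorem connectedOn [DecidableEq E] (h : IsFlowCycle src tgt g w n) :
    ConnectedOn src tgt {e | cycleFlow g w n e ≠ 0} := by
  intro a b ha hb
  obtain ⟨la, hla, rfl⟩ := h.exists_flowTail_eq_of_touches ha
  obtain ⟨lb, hlb, rfl⟩ := h.exists_flowTail_eq_of_touches hb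
  exact (h.reach_flowTail hla.le).symm.trans (h.reach_flowTail hlb.le)

variable [DecidableEq V] [DecidableEq E] [Fintype E]

theorem isCirculation (h : IsFlowCycle src tgt g w n) :
    IsCirculation src tgt (cycleFlow g w n) := by
  intro u
  rw [← sub_eq_zero, ← Finset.sum_sub_distrib]
  have hpt : ∀ e, (if tgt e = u then cycleFlow g w n e else 0) -
      (if src e = u then cycleFlow g w n e else 0) =
      if e ∈ (Finset.range n).image w then
        (if flowHead src tgt g e = u then 1 else 0) - (if flowTail src tgt g e = u then 1 else 0)
      else 0 := fun e => by
    by_cases he : e ∈ (Finset.range n).image w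
    · simpa [cycleFlow, he] using ite_tgt_sub_ite_src_sign_mul (h.ne_zero_of_mem_image he) u 1
    · simp [cycleFlow, he]
  rw [Finset.sum_congr rfl fun e _ => hpt e, h.sum_ite_mem_image, Finset.sum_sub_distrib,
    h.sum_flowHead (fun v => if v = u then (1 : ℤ) else 0), sub_self]

theorem suppDegree_eq_two (h : IsFlowCycle src tgt g w n) {u : V}
    (hu : Touches src tgt {e | cycleFlow g w n e ≠ 0} u) :
    suppDegree src tgt (cycleFlow g w n) u = 2 := by
  have hcard (p : E → V) :
      (Finset.univ.filter fun e => cycleFlow g w n e ≠ 0 ∧ p e = u).card =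
        ∑ k ∈ Finset.range n, if p (w k) = u then 1 else 0 := by
    rw [Finset.card_filter, ← h.sum_ite_mem_image fun e => if p e = u then 1 else 0]
    refine Finset.sum_congr rfl fun e _ => ?_
    by_cases he : e ∈ (Finset.range n).image w <;> simp [h.cycleFlow_ne_zero_iff, he]
  obtain ⟨l, hl, rfl⟩ := h.exists_flowTail_eq_of_touches hu
  have hvisit : ∑ k ∈ Finset.range n,
      (if flowTail src tgt g (w k) = flowTail src tgt g (w l) then 1 else 0) = 1 := by
    rw [Finset.sum_eq_single_of_mem l (Finset.mem_range.2 hl) fun k hk hkl => if_neg fun heq =>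
      hkl (h.injOn (Finset.mem_range.1 hk) hl heq), if_pos rfl]
  unfold suppDegree
  rw [hcard src, hcard tgt, ← Finset.sum_add_distrib,
    Finset.sum_congr rfl fun k _ => ite_src_add_ite_tgt (g := g) (w k) _ 1,
    Finset.sum_add_distrib, h.sum_flowHead (fun v => if v = _ then 1 else 0), hvisit]

theorem isUnitCycleFlow (h : IsFlowCycle src tgt g w n) :
    IsUnitCycleFlow src tgt (cycleFlow g w n) := by
  refine ⟨⟨h.isCirculation, ⟨w 0, h.cycleFlow_ne_zero_iff.2 ?_⟩, h.connectedOn,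
    fun u hu => h.suppDegree_eq_two hu⟩, fun e => ?_⟩
  · exact Finset.mem_image_of_mem w (Finset.mem_range.2 h.pos)
  · unfold cycleFlow
    split_ifs
    · have := Int.sign_trichotomy (g e)
      omega
    · simp

end IsFlowCycle

variable [DecidableEq V] [Fintype E]

theorem IsCirculation.sum_ite_flowTail_eq (hg : IsCirculation src tgt g) (u : V) :
    ∑ e, (if flowTail src tgt g e = u then |g e| else 0) =
      ∑ e, (if flowHead src tgt g e = u then |g e| else 0) := by
  have hpt : ∀ e, (if tgt e = u then g e else 0) - (if src e = u then g e else 0) =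
      (if flowHead src tgt g e = u then |g e| else 0) -
        (if flowTail src tgt g e = u then |g e| else 0) := fun e => by
    by_cases he : g e = 0
    · simp [he]
    · conv_lhs => rw [← Int.sign_mul_abs (g e)]
      exact ite_tgt_sub_ite_src_sign_mul he u _
  have hsum := Finset.sum_congr rfl fun e (_ : e ∈ Finset.univ) => hpt e
  rw [Finset.sum_sub_distrib, Finset.sum_sub_distrib, hg u, sub_self, eq_comm, sub_eq_zero] at hsum
  exact hsum.symm

theorem IsCirculation.exists_flowTail_eq_flowHead (hg : IsCirculation src tgt g) {e : E}
    (he : g e ≠ 0) : ∃ e', g e' ≠ 0 ∧ flowTail src tgt g e' = flowHead src tgt g e := by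
  by_contra! hnone
  have hout : ∑ e', (if flowTail src tgt g e' = flowHead src tgt g e then |g e'| else 0) = 0 :=
    Finset.sum_eq_zero fun e' _ => by
      by_cases he' : g e' = 0
      · simp [he']
      · simp [hnone e' he']
  have hin :
      |g e| ≤ ∑ e', (if flowHead src tgt g e' = flowHead src tgt g e then |g e'| else 0) := by
    simpa using Finset.single_le_sum (f := fun e' =>
      if flowHead src tgt g e' = flowHead src tgt g e then |g e'| else 0)
      (fun e' _ => by positivity) (Finset.mem_univ e)
  rw [← hg.sum_ite_flowTail_eq, hout] at hin
  exact he (abs_nonpos_iff.1 hin)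

theorem IsCirculation.exists_flowWalk (hg : IsCirculation src tgt g) {e₀ : E}
    (he₀ : g e₀ ≠ 0) :
    ∃ w : ℕ → E, (∀ k, g (w k) ≠ 0) ∧
      ∀ k, flowHead src tgt g (w k) = flowTail src tgt g (w (k + 1)) := by
  have hstep (e : {e // g e ≠ 0}) :
      ∃ e' : {e // g e ≠ 0}, flowTail src tgt g e' = flowHead src tgt g e := by
    obtain ⟨e', he', heq⟩ := hg.exists_flowTail_eq_flowHead e.2
    exact ⟨⟨e', he'⟩, heq⟩
  choose F hF using hstep
  refine ⟨fun k => (F^[k] ⟨e₀, he₀⟩).1, fun k => (F^[k] _).2, fun k => ?_⟩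
  change flowHead src tgt g (F^[k] _).1 = flowTail src tgt g (F^[k + 1] _).1
  rw [Function.iterate_succ_apply']
  exact (hF _).symm

theorem IsCirculation.exists_isFlowCycle [Finite V] (hg : IsCirculation src tgt g) {e₀ : E}
    (he₀ : g e₀ ≠ 0) : ∃ w n, IsFlowCycle src tgt g w n := by
  obtain ⟨w, hw₀, hw⟩ := hg.exists_flowWalk he₀
  obtain ⟨i, j, hij, heq, hinj⟩ := exists_lt_map_eq_injOn_Iio fun k => flowTail src tgt g (w k)
  refine ⟨fun k => w (i + k), j - i, by omega, fun k _ => hw₀ _, fun k _ => hw _,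
    by simpa [Nat.add_sub_cancel' hij.le] using heq.symm, fun k hk l hl hkl => ?_⟩
  have := hinj (show i + k < j by simp at hk; omega) (show i + l < j by simp at hl; omega) hkl
  omega

theorem IsCirculation.exists_unitCycleFlow [Finite V] (hg : IsCirculation src tgt g) {e₀ : E}
    (he₀ : g e₀ ≠ 0) : ∃ C, IsUnitCycleFlow src tgt C ∧ FlowContains g C := by
  classical
  obtain ⟨w, n, h⟩ := hg.exists_isFlowCycle he₀
  exact ⟨cycleFlow g w n, h.isUnitCycleFlow, flowContains_ite_sign _ g⟩

end FlowCycle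

section Decomposition

variable {V E : Type} [Finite V] [Fintype E] [DecidableEq V] {src tgt : E → V}

theorem IsCirculation.exists_unitCycleFlow_ne_zero {g : E → ℤ} (hg : IsCirculation src tgt g)
    {e₀ : E} (he₀ : g e₀ ≠ 0) :
    ∃ C, IsUnitCycleFlow src tgt C ∧ FlowContains g C ∧ C e₀ ≠ 0 := by
  induction hm : ∑ e, (g e).natAbs using Nat.strong_induction_on generalizing g with
  | _ m ih =>
  obtain ⟨C, hC, hgC⟩ := hg.exists_unitCycleFlow he₀
  by_cases hCe₀ : C e₀ ≠ 0
  · exact ⟨C, hC, hgC, hCe₀⟩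
  -- subtracting `C` lowers the total flow and keeps `g e₀`
  obtain ⟨e₁, he₁⟩ := hC.1.2.1
  obtain ⟨C', hC', hgC', hC'e₀⟩ := ih _ (hm ▸ hgC.sum_natAbs_sub_lt he₁) (hg.sub hC.1.1)
    (by simpa [not_not.1 hCe₀] using he₀) rfl
  exact ⟨C', hC', hgC.sub.trans hgC', hC'e₀⟩

theorem IsCirculation.exists_conformalFamily {g : E → ℤ} (hg : IsCirculation src tgt g) (e₀ : E)
    (m : ℕ) (hm : (m : ℤ) ≤ |g e₀|) :
    ∃ Cs : Fin m → E → ℤ, (∀ i, IsUnitCycleFlow src tgt (Cs i)) ∧ (∀ i, Cs i e₀ ≠ 0) ∧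
      ConformalFamily g Cs := by
  induction m generalizing g with
  | zero =>
    exact ⟨Fin.elim0, fun i => i.elim0, fun i => i.elim0, conformalFamily_of_isEmpty _ _⟩
  | succ m ih =>
    have he₀ : g e₀ ≠ 0 := fun h => by simp [h] at hm; omega
    obtain ⟨C, hC, hgC, hCe₀⟩ := hg.exists_unitCycleFlow_ne_zero he₀
    have hCabs : |C e₀| = 1 := by rcases hC.2 e₀ with h | h | h <;> simp_all
    obtain ⟨Cs, hCs, hCs₀, hconf⟩ := ih (hg.sub hC.1.1) (by
      have := flowContains_iff.1 hgC e₀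
      simp only [Pi.sub_apply]
      push_cast at hm
      linarith)
    exact ⟨Fin.cons C Cs, Fin.cases hC hCs, Fin.cases hCe₀ hCs₀, hconf.cons hgC⟩

theorem not_isElementary_of_even {f D : E → ℤ} (hD : IsCirculation src tgt D)
    (hfD : FlowContains f D) {e₀ : E} (hD₀ : D e₀ ≠ 0) (heven : ∀ e, 2 ∣ D e) :
    ¬ IsElementary src tgt f := by
  choose D' hD' using heven
  obtain rfl : D = fun e => 2 * D' e := funext hD'
  obtain ⟨C, hC, hD'C⟩ := (hD.of_mul two_ne_zero).exists_unitCycleFlow (e₀ := e₀)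
    (by simpa using hD₀)
  exact fun helem => helem ⟨C, hC, hfD.trans (hD'C.mul_left 2)⟩

end Decomposition

theorem elementary_linfty_le_rank_general {V E : Type} [Fintype V] [Fintype E] [DecidableEq V]
    (src tgt : E → V) (r : ℕ)
    (hconn : GraphConnected src tgt)
    (hrank : Fintype.card E + 1 = Fintype.card V + r)
    (f : E → ℤ) (hf : IsCirculation src tgt f)
    (helem : IsElementary src tgt f) :
    ∀ e, |f e| ≤ (r : ℤ) := by
  intro e₀
  by_contra! hlt
  obtain ⟨Cs, hCs, hCs₀, hconf⟩ := hf.exists_conformalFamily e₀ (r + 1) (by omega)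
  obtain ⟨s, hs, heven⟩ :=
    exists_nonempty_even_sum_of_isCirculation hconn (fun i => (hCs i).1.1)
      (by simp only [Fintype.card_fin]; omega)
  refine not_isElementary_of_even (IsCirculation.sum (fun i => (hCs i).1.1) s)
    (hconf.flowContains_sum s) (e₀ := e₀) ?_ heven helem
  rw [← abs_pos, hconf.abs_sum]
  exact Finset.sum_pos (fun i _ => abs_pos.2 (hCs₀ i)) hs

/-- An elementary circulation on a connected graph with cycle rank `r` has
`L∞` norm at most `r`. -/
theorem elementary_linfty_le_rank {V E : Type} [Fintype V] [Fintype E] [DecidableEq V] [DecidableEq E]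
    (src tgt : E → V) (r : ℕ)
    (hconn : GraphConnected src tgt)
    (hrank : Fintype.card E + 1 = Fintype.card V + r)
    (f : E → ℤ) (hf : IsCirculation src tgt f)
    (helem : IsElementary src tgt f) :
    ∀ e, |f e| ≤ (r : ℤ) :=
  elementary_linfty_le_rank_general src tgt r hconn hrank f hf helem
end

section
/- The bound in the previous proposition is tight: for every r >= 1, there exists a connected undirected graph with cycle rank r and an elementary circulation f on it such that |f(e)| = r for some edge e. -/
open Finset

/-!
Take two vertices joined by `r + 1` parallel edges (cycle rank `r`), and send `r` units along
one edge and one unit back along each of the others. Twice a unit cycle flow contained in this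
circulation must vanish wherever the circulation has absolute value at most `1`, so it would be
supported on the single heavy edge; but one edge that is not a loop does not form a cycle.
-/

section Flows

variable {V E : Type} {src tgt : E → V}

lemma eq_zero_of_flowContains_two_mul {f C : E → ℤ} (hC : FlowContains f (fun e => 2 * C e))
    {e : E} (he : |f e| ≤ 1) : C e = 0 := by
  have h := (hC e).1
  rw [abs_mul, abs_two] at h
  exact abs_eq_zero.mp (by linarith [abs_nonneg (C e)])

lemma graphConnected_of_forall_eq_src_or_tgt {e : E} (h : ∀ v, v = src e ∨ v = tgt e) :
    GraphConnected src tgt := by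
  have hadj : EdgeAdj src tgt Set.univ (src e) (tgt e) ∧ EdgeAdj src tgt Set.univ (tgt e) (src e) :=
    ⟨⟨e, trivial, Or.inl ⟨rfl, rfl⟩⟩, ⟨e, trivial, Or.inr ⟨rfl, rfl⟩⟩⟩
  have hfrom : ∀ v, Reach src tgt Set.univ (src e) v := fun v => by
    rcases h v with rfl | rfl
    exacts [.refl, .single hadj.1]
  have hto : ∀ v, Reach src tgt Set.univ v (src e) := fun v => by
    rcases h v with rfl | rfl
    exacts [.refl, .single hadj.2]
  exact fun a b => (hto a).trans (hfrom b)

variable [Fintype E] [DecidableEq V]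

lemma isCirculation_const_of_sum_eq_zero (a b : V) {f : E → ℤ} (hf : ∑ e, f e = 0) :
    IsCirculation (fun _ => a) (fun _ => b) f := by
  intro v
  by_cases hb : b = v <;> by_cases ha : a = v <;> simp [ha, hb, hf]

lemma IsCycleFlow.not_support_eq_singleton {C : E → ℤ} (hC : IsCycleFlow src tgt C) {e : E}
    (he : src e ≠ tgt e) : ¬ ∀ e', C e' ≠ 0 ↔ e' = e := by
  intro hsupp
  have hout : univ.filter (fun e' => C e' ≠ 0 ∧ src e' = src e) = {e} := by
    ext e'
    simp only [mem_filter, mem_univ, true_and, mem_singleton, hsupp]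
    exact ⟨And.left, fun h => ⟨h, h ▸ rfl⟩⟩
  have hin : univ.filter (fun e' => C e' ≠ 0 ∧ tgt e' = src e) = ∅ := by
    ext e'
    simp only [mem_filter, mem_univ, true_and, hsupp, notMem_empty, iff_false]
    rintro ⟨rfl, h⟩
    exact he h.symm
  have hdeg := hC.2.2.2 (src e) ⟨e, (hsupp e).2 rfl, Or.inl rfl⟩
  simp [suppDegree, hout, hin] at hdeg

lemma isElementary_of_abs_le_one_of_ne {f : E → ℤ} {e₀ : E} (he₀ : src e₀ ≠ tgt e₀)
    (hf : ∀ e ≠ e₀, |f e| ≤ 1) : IsElementary src tgt f := by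
  rintro ⟨C, ⟨hcycle, -⟩, hcont⟩
  have hoff : ∀ e ≠ e₀, C e = 0 := fun e he => eq_zero_of_flowContains_two_mul hcont (hf e he)
  obtain ⟨e₁, he₁⟩ := hcycle.2.1
  obtain rfl : e₁ = e₀ := by_contra fun h => he₁ (hoff e₁ h)
  exact hcycle.not_support_eq_singleton he₀ fun e =>
    ⟨fun h => by_contra fun h' => h (hoff e h'), fun h => h ▸ he₁⟩

end Flows

/-- The bound `‖f‖∞ ≤ r` for elementary circulations is tight: for every `r ≥ 1`
there is a connected graph with cycle rank `r` and an elementary circulation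
attaining value `r` on some edge. -/
theorem elementary_linfty_tight :
    ∀ r : ℕ, 1 ≤ r →
      ∃ (n m : ℕ) (src tgt : Fin m → Fin n) (f : Fin m → ℤ),
        GraphConnected src tgt ∧
        m + 1 = n + r ∧
        IsCirculation src tgt f ∧
        IsElementary src tgt f ∧
        ∃ e : Fin m, |f e| = (r : ℤ) := by
  intro r _
  refine ⟨2, r + 1, fun _ => 0, fun _ => 1, Fin.cons (r : ℤ) fun _ => -1,
    graphConnected_of_forall_eq_src_or_tgt (e := 0) (by decide), by ring,
    isCirculation_const_of_sum_eq_zero 0 1 (by simp [Fin.sum_cons]),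
    isElementary_of_abs_le_one_of_ne (e₀ := 0) (by decide) fun e he => ?_, 0, by simp⟩
  obtain ⟨i, rfl⟩ := Fin.exists_succ_eq.mpr he
  simp
end
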